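/- Let p be an odd prime and let F = Σ_{n≥1} a_n t^n ∈ C_p[[t]] be a power series with zero constant term such that val(n · a_n) ≥ 0 for all n ≥ 1 and val(a_1) = 0 (i.e. the formal derivative of F has integral coefficients and its constant term is a unit). Then F has at most one zero t ∈ C_p with val(t) ≥ 1. In particular, if ω is a differential on a smooth projective curve X over Z_p^nr which does not vanish at z̄ ∈ X(F̄_p), then the Coleman integral ∫_b ω has at most one unramified zero in the residue disc ]z̄[. -/

import Mathlib

/-!
STATEMENT 18.
Let `p` be an odd prime and `F = ∑_{n≥1} aₙ tⁿ ∈ ℂ_p[[t]]` with zero constant term,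
`val(n·aₙ) ≥ 0` for all `n ≥ 1` and `val a₁ = 0`.  Then `F` has at most one zero `t ∈ ℂ_p` with
`val t ≥ 1`.  In particular, a Coleman integral `∫_b ω` on a smooth projective curve over
`Z_p^nr` whose differential `ω` does not vanish at `z̄` has at most one unramified zero in the
residue disc `]z̄[`.

`ℂ_p` is formalised as a field `C` with an additive valuation `v` normalised by `v p = 1`,
algebraically closed and complete (completeness phrased via `v`-Cauchy sequences); these
properties characterise `ℂ_p`-like fields and in particular hold for `ℂ_p`.  `F(t) = 0` is
expressed by saying the partial sums `∑_{i≤n} aᵢ tⁱ` tend to `0` in the valuation `v`.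
For the "in particular" clause: on the residue disc `]z̄[` with integral parameter `t`, the
Coleman integral `∫_b ω` is given by a series `a₀ + ∑_{n≥1} aₙ tⁿ` whose formal derivative is
the expansion of `ω` — a differential integral on the disc with `ω(z̄) ≠ 0`, i.e. with
`val(n·aₙ) ≥ 0` and `val a₁ = 0` — and unramified points of the disc have parameter of
valuation `≥ 1`; so the second conclusion (for an arbitrary constant term `a₀`) states that
such a locally analytic integral has at most one unramified zero in the disc.
-/

/-- The series `∑_{n≥0} aₙ tⁿ` converges to `0` at `t`, in the additive valuation `v`. -/
def SeriesVanishesAt {C : Type} [Field C] (v : AddValuation C (WithTop ℝ)) (a : ℕ → C)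
    (t : C) : Prop :=
  ∀ B : ℝ, ∃ N : ℕ, ∀ n ≥ N, (B : WithTop ℝ) < v (∑ i ∈ Finset.range (n + 1), a i * t ^ i)

section Helpers


variable {C : Type} [Field C] (v : AddValuation C (WithTop ℝ))

lemma v_eq_top_imp_zero {x : C} (h : v x = ⊤) : x = 0 := by
  by_contra hx
  have h1 : v x + v x⁻¹ = 0 := by
    rw [← v.map_mul, mul_inv_cancel₀ hx, v.map_one]
  rw [h, top_add] at h1
  exact (WithTop.top_ne_zero) h1

lemma v_nat_nonneg : ∀ n : ℕ, (0 : WithTop ℝ) ≤ v n := by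
  intro n
  induction n with
  | zero => simp [v.map_zero]
  | succ k ih =>
    push_cast
    calc (0 : WithTop ℝ) ≤ min (v k) (v 1) := by
          rw [v.map_one]; exact le_min ih le_rfl
      _ ≤ v ((k : C) + 1) := v.map_add _ _

lemma v_int_nonneg : ∀ z : ℤ, (0 : WithTop ℝ) ≤ v z := by
  intro z
  induction z using Int.induction_on with
  | zero => simp [v.map_zero]
  | succ k _ => exact_mod_cast v_nat_nonneg v (k+1)
  | pred k _ =>
      have : ((-(k:ℤ)-1 : ℤ) : C) = -((k+1 : ℕ) : C) := by push_cast; ring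
      rw [this, v.map_neg]
      exact v_nat_nonneg v _

variable {p : ℕ} (hp : p.Prime) (hvp : v (p : C) = 1)

include hp hvp in
lemma v_coprime {m : ℕ} (hm : ¬ p ∣ m) : v (m : C) = 0 := by
  have hco : Nat.Coprime p m := (Nat.Prime.coprime_iff_not_dvd hp).mpr hm
  have hbez : (1 : ℤ) = p * Nat.gcdA p m + m * Nat.gcdB p m := by
    have := Nat.gcd_eq_gcd_ab p m
    rwa [hco] at this
  have hC : (1 : C) = (p : C) * ((Nat.gcdA p m : ℤ) : C) + (m : C) * ((Nat.gcdB p m : ℤ) : C) := by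
    have := congrArg (fun z : ℤ => (z : C)) hbez
    push_cast at this ⊢
    exact this
  have h0 : min (v ((p:C) * ((Nat.gcdA p m : ℤ) : C))) (v ((m : C) * ((Nat.gcdB p m : ℤ) : C)))
      ≤ 0 := by
    calc _ ≤ v ((p:C) * ((Nat.gcdA p m : ℤ) : C) + (m : C) * ((Nat.gcdB p m : ℤ) : C)) :=
            v.map_add _ _
      _ = v (1 : C) := by rw [← hC]
      _ = 0 := v.map_one
  have h1 : (0 : WithTop ℝ) < v ((p:C) * ((Nat.gcdA p m : ℤ) : C)) := by
    rw [v.map_mul, hvp]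
    calc (0 : WithTop ℝ) < 1 := by norm_num
      _ ≤ 1 + v ((Nat.gcdA p m : ℤ) : C) :=
          le_add_of_nonneg_right (v_int_nonneg v _)
  have h2 : v ((m : C) * ((Nat.gcdB p m : ℤ) : C)) ≤ 0 := by
    rcases min_le_iff.mp h0 with h | h
    · exact absurd (lt_of_lt_of_le h1 h) (by simp)
    · exact h
  rw [v.map_mul] at h2
  have h3 : v (m : C) ≤ v (m : C) + v ((Nat.gcdB p m : ℤ) : C) :=
    le_add_of_nonneg_right (v_int_nonneg v _)
  exact le_antisymm (h3.trans h2) (v_nat_nonneg v m)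

include hvp in
lemma vp_pow : ∀ k : ℕ, v ((p : C) ^ k) = ((k : ℝ) : WithTop ℝ) := by
  intro k
  induction k with
  | zero => simp [v.map_one]
  | succ j ih =>
    rw [pow_succ, v.map_mul, ih, hvp]
    norm_cast

lemma three_pow_ge : ∀ k : ℕ, 1 ≤ k → k + 2 ≤ 3 ^ k := by
  intro k hk
  induction k with
  | zero => omega
  | succ j ih =>
    rcases Nat.eq_or_lt_of_le hk with h | h
    · have hj : j = 0 := by omega
      subst hj; norm_num
    · have h1 := ih (by omega)
      have h2 : 3 * (j + 2) ≤ 3 * 3 ^ j := Nat.mul_le_mul_left 3 h1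
      have h3 : 3 ^ (j + 1) = 3 * 3 ^ j := by ring
      omega

include hp hvp in
lemma v_nat_le (hodd : Odd p) {n : ℕ} (hn : 2 ≤ n) :
    v (n : C) ≤ (((n : ℝ) - 2) : ℝ) := by
  set k := n.factorization p with hk
  have hself : p ^ k * (n / p ^ k) = n := Nat.ordProj_mul_ordCompl_eq_self n p
  have hnd : ¬ p ∣ (n / p ^ k) := Nat.not_dvd_ordCompl hp (by omega)
  have hv : v (n : C) = ((k : ℝ) : WithTop ℝ) := by
    rw [← hself]
    push_cast
    rw [v.map_mul, vp_pow v hvp, v_coprime v hp hvp hnd, add_zero]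
    norm_cast
  rw [hv, WithTop.coe_le_coe]
  have hp3 : 3 ≤ p := by
    have := hp.two_le
    rcases Nat.lt_or_ge p 3 with h | h
    · interval_cases p
      exact absurd hodd (by decide)
    · omega
  have hkn : k + 2 ≤ n := by
    rcases Nat.eq_zero_or_pos k with h0 | h0
    · omega
    · have hdvd : p ^ k ∣ n := Nat.ordProj_dvd n p
      have hle : p ^ k ≤ n := Nat.le_of_dvd (by omega) hdvd
      have h3k : 3 ^ k ≤ p ^ k := Nat.pow_le_pow_left hp3 k
      have := three_pow_ge k h0
      omega
  have : (k : ℝ) + 2 ≤ (n : ℝ) := by exact_mod_cast hkn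
  linarith

lemma vpow_ge {t : C} (ht : (1 : WithTop ℝ) ≤ v t) :
    ∀ j : ℕ, ((j : ℝ) : WithTop ℝ) ≤ v (t ^ j) := by
  intro j
  induction j with
  | zero => simp [v.map_one]
  | succ i ih =>
    rw [pow_succ, v.map_mul]
    calc (((i + 1 : ℕ) : ℝ) : WithTop ℝ) = ((i:ℝ) : WithTop ℝ) + ((1:ℝ) : WithTop ℝ) := by
          norm_cast
      _ ≤ v (t ^ i) + v t := add_le_add ih (by exact_mod_cast ht)

include hp hvp in
lemma key_lemma (hodd : Odd p) (a : ℕ → C)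
    (hint : ∀ n : ℕ, 1 ≤ n → 0 ≤ v ((n : C) * a n)) (ha1 : v (a 1) = 0) :
    {t : C | 1 ≤ v t ∧ SeriesVanishesAt v a t}.Subsingleton := by
  intro t1 h1 t2 h2
  obtain ⟨hv1, hs1⟩ := h1
  obtain ⟨hv2, hs2⟩ := h2
  by_contra hne
  have hu : t1 - t2 ≠ 0 := sub_ne_zero.mpr hne
  have hvu : v (t1 - t2) ≠ ⊤ := fun h => hu (v_eq_top_imp_zero v h)
  obtain ⟨d, hd⟩ := WithTop.ne_top_iff_exists.mp hvu
  -- term bound for i ≥ 2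
  have hterm : ∀ i : ℕ, 2 ≤ i →
      ((d + 1 : ℝ) : WithTop ℝ) ≤ v (a i * (t1 ^ i - t2 ^ i)) := by
    intro i hi
    have hsum : (((i - 1 : ℕ) : ℝ) : WithTop ℝ)
        ≤ v (∑ j ∈ Finset.range i, t1 ^ j * t2 ^ (i - 1 - j)) := by
      apply v.map_le_sum
      intro j hj
      have hj' : j < i := Finset.mem_range.mp hj
      rw [v.map_mul]
      have hsplit : j + (i - 1 - j) = i - 1 := by omega
      calc (((i - 1 : ℕ) : ℝ) : WithTop ℝ)
          = ((j : ℝ) : WithTop ℝ) + (((i - 1 - j : ℕ) : ℝ) : WithTop ℝ) := by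
            rw [← hsplit]; norm_cast; omega
        _ ≤ v (t1 ^ j) + v (t2 ^ (i - 1 - j)) :=
            add_le_add (vpow_ge v hv1 j) (vpow_ge v hv2 _)
    have hgeo : (((i - 1 : ℕ) : ℝ) : WithTop ℝ) + (d : WithTop ℝ) ≤ v (t1 ^ i - t2 ^ i) := by
      rw [← geom_sum₂_mul t1 t2 i, v.map_mul, ← hd]
      exact add_le_add hsum le_rfl
    have hB : v ((i : C) * a i) + v (t1 ^ i - t2 ^ i)
        = v (i : C) + v (a i * (t1 ^ i - t2 ^ i)) := by
      rw [← v.map_mul, ← v.map_mul, mul_assoc]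
    have hC2 : (((i - 1 : ℕ) : ℝ) : WithTop ℝ) + (d : WithTop ℝ)
        ≤ v (i : C) + v (a i * (t1 ^ i - t2 ^ i)) := by
      rw [← hB]
      calc (((i - 1 : ℕ) : ℝ) : WithTop ℝ) + (d : WithTop ℝ)
          ≤ v (t1 ^ i - t2 ^ i) := hgeo
        _ ≤ v ((i : C) * a i) + v (t1 ^ i - t2 ^ i) :=
            le_add_of_nonneg_left (hint i (by omega))
    rcases eq_or_ne (v (a i * (t1 ^ i - t2 ^ i))) ⊤ with htop | htop
    · rw [htop]; exact le_top
    obtain ⟨y, hy⟩ := WithTop.ne_top_iff_exists.mp htop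
    have hvi_le : v (i : C) ≤ (((i : ℝ) - 2 : ℝ) : WithTop ℝ) := v_nat_le v hp hvp hodd hi
    have hvi_ne : v (i : C) ≠ ⊤ := fun h => by simp [h] at hvi_le
    obtain ⟨r, hr⟩ := WithTop.ne_top_iff_exists.mp hvi_ne
    rw [← hy]
    rw [WithTop.coe_le_coe]
    have hr_le : r ≤ (i : ℝ) - 2 := by
      rw [← hr, WithTop.coe_le_coe] at hvi_le; exact hvi_le
    have hineq : ((i - 1 : ℕ) : ℝ) + d ≤ r + y := by
      rw [← hr, ← hy, ← WithTop.coe_add, ← WithTop.coe_add, WithTop.coe_le_coe] at hC2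
      exact hC2
    have hcast : ((i - 1 : ℕ) : ℝ) = (i : ℝ) - 1 := by
      have : (1:ℕ) ≤ i := by omega
      push_cast [Nat.cast_sub this]
      ring
    rw [hcast] at hineq
    linarith
  -- the difference of partial sums has valuation exactly d
  have hdiff : ∀ n : ℕ, 1 ≤ n →
      v ((∑ i ∈ Finset.range (n + 1), a i * t1 ^ i)
        - ∑ i ∈ Finset.range (n + 1), a i * t2 ^ i) = (d : WithTop ℝ) := by
    intro n hn
    have hre : (∑ i ∈ Finset.range (n + 1), a i * t1 ^ i)
        - ∑ i ∈ Finset.range (n + 1), a i * t2 ^ i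
        = ∑ i ∈ Finset.range (n + 1), a i * (t1 ^ i - t2 ^ i) := by
      rw [← Finset.sum_sub_distrib]
      exact Finset.sum_congr rfl fun i _ => by ring
    rw [hre]
    have h1mem : (1 : ℕ) ∈ Finset.range (n + 1) := Finset.mem_range.mpr (by omega)
    rw [← Finset.add_sum_erase _ _ h1mem]
    have hfe : v (a 1 * (t1 ^ 1 - t2 ^ 1)) = (d : WithTop ℝ) := by
      rw [pow_one, pow_one, v.map_mul, ha1, zero_add, ← hd]
    have hrest : ((d + 1 : ℝ) : WithTop ℝ)
        ≤ v (∑ i ∈ (Finset.range (n + 1)).erase 1, a i * (t1 ^ i - t2 ^ i)) := by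
      apply v.map_le_sum
      intro i hi
      rcases Nat.lt_or_ge i 2 with h2 | h2
      · have hi1 : i ≠ 1 := Finset.ne_of_mem_erase hi
        have : i = 0 := by omega
        subst this
        simp [v.map_zero]
      · exact hterm i h2
    have hlt : v (a 1 * (t1 ^ 1 - t2 ^ 1))
        < v (∑ i ∈ (Finset.range (n + 1)).erase 1, a i * (t1 ^ i - t2 ^ i)) := by
      rw [hfe]
      calc (d : WithTop ℝ) < ((d + 1 : ℝ) : WithTop ℝ) := by
            rw [WithTop.coe_lt_coe]; linarith
        _ ≤ _ := hrest
    rw [v.map_add_eq_of_lt_left hlt]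
    exact hfe
  -- contradiction with both series vanishing
  obtain ⟨N1, hN1⟩ := hs1 d
  obtain ⟨N2, hN2⟩ := hs2 d
  set n := max (max N1 N2) 1 with hndef
  have hn1 : (d : WithTop ℝ) < v (∑ i ∈ Finset.range (n + 1), a i * t1 ^ i) :=
    hN1 n (le_trans (le_max_left _ _) (le_max_left _ _))
  have hn2 : (d : WithTop ℝ) < v (∑ i ∈ Finset.range (n + 1), a i * t2 ^ i) :=
    hN2 n (le_trans (le_max_right _ _) (le_max_left _ _))
  have hfin : (d : WithTop ℝ) < v ((∑ i ∈ Finset.range (n + 1), a i * t1 ^ i)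
      - ∑ i ∈ Finset.range (n + 1), a i * t2 ^ i) :=
    lt_of_lt_of_le (lt_min hn1 hn2) (v.map_sub _ _)
  rw [hdiff n (le_max_right _ _)] at hfin
  exact lt_irrefl _ hfin

end Helpers

theorem at_most_one_unramified_zero
    (p : ℕ) [Fact p.Prime] (hodd : Odd p)
    (C : Type) [Field C] [Algebra ℚ_[p] C] [IsAlgClosed C]
    (v : AddValuation C (WithTop ℝ)) (hvp : v (algebraMap ℚ_[p] C p) = 1)
    -- completeness of C with respect to v
    (hcomplete : ∀ s : ℕ → C,
      (∀ B : ℝ, ∃ N : ℕ, ∀ m ≥ N, ∀ n ≥ N, (B : WithTop ℝ) < v (s m - s n)) →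
      ∃ l : C, ∀ B : ℝ, ∃ N : ℕ, ∀ n ≥ N, (B : WithTop ℝ) < v (s n - l)) :
    -- main statement: a power series with zero constant term, integrally-bounded coefficients
    -- (`val (n·aₙ) ≥ 0`) and unit linear coefficient has at most one zero of valuation ≥ 1
    (∀ a : ℕ → C, a 0 = 0 →
      (∀ n : ℕ, 1 ≤ n → 0 ≤ v ((n : C) * a n)) → v (a 1) = 0 →
      {t : C | 1 ≤ v t ∧ SeriesVanishesAt v a t}.Subsingleton) ∧
    -- "in particular": the same with an arbitrary constant term `a₀` (the value `∫_b^{z₀} ω`),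
    -- i.e. a Coleman integral `∫_b ω` on a residue disc, expanded in an integral parameter,
    -- whose differential `ω` is integral on the disc (`val (n·aₙ) ≥ 0`) and does not vanish at
    -- the reduction `z̄` (`val a₁ = 0`), has at most one unramified zero (zero of valuation ≥ 1)
    (∀ a : ℕ → C,
      (∀ n : ℕ, 1 ≤ n → 0 ≤ v ((n : C) * a n)) → v (a 1) = 0 →
      {t : C | 1 ≤ v t ∧ SeriesVanishesAt v a t}.Subsingleton) := by
  have hp : p.Prime := Fact.out
  have hvp2 : v ((p : ℕ) : C) = 1 := by rw [map_natCast] at hvp; exact hvp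
  exact ⟨fun a _ h1 h2 => key_lemma v hp hvp2 hodd a h1 h2,
    fun a h1 h2 => key_lemma v hp hvp2 hodd a h1 h2⟩
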